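/- Let C : X → Y → ℝ be a channel, Π : Z × X → ℝ a joint distribution (nonnegative, summing to 1) with Z-marginal ρ, and Ẑ : Z → X → ℝ a channel with ρ z * Ẑ z x = Π (z,x) for all z,x. Then for every finite nonempty W and every nonnegative gain function g : W → Z → ℝ with V_g(ρ) > 0, the collateral leakage is bounded by the Bayes min-capacity of C: L_g(ρ, Ẑ·C) ≤ ML(C) = log₂( Σ_y max_x C x y ). -/
import Mathlib


open Finset

/-- Prior g-vulnerability. -/
noncomputable def vul {W X : Type} [Fintype X] [Fintype W] [Nonempty W]
    (g : W → X → ℝ) (π : X → ℝ) : ℝ :=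
  Finset.univ.sup' Finset.univ_nonempty (fun w => ∑ x, π x * g w x)

/-- Posterior g-vulnerability. -/
noncomputable def vulPost {W X Y : Type} [Fintype X] [Fintype Y] [Fintype W] [Nonempty W]
    (g : W → X → ℝ) (π : X → ℝ) (C : X → Y → ℝ) : ℝ :=
  ∑ y, Finset.univ.sup' Finset.univ_nonempty (fun w => ∑ x, π x * C x y * g w x)

/-- Multiplicative g-leakage. -/
noncomputable def leak {W X Y : Type} [Fintype X] [Fintype Y] [Fintype W] [Nonempty W]
    (g : W → X → ℝ) (π : X → ℝ) (C : X → Y → ℝ) : ℝ :=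
  Real.logb 2 (vulPost g π C / vul g π)

/-- Bayes min-capacity: `ML(C) = log₂ ( Σ_y max_x C x y )`. -/
noncomputable def ML {X Y : Type} [Fintype X] [Nonempty X] [Fintype Y]
    (C : X → Y → ℝ) : ℝ :=
  Real.logb 2 (∑ y, Finset.univ.sup' Finset.univ_nonempty (fun x => C x y))

/-- Channel cascade. -/
noncomputable def cascade {Z X Y : Type} [Fintype X]
    (Zc : Z → X → ℝ) (C : X → Y → ℝ) : Z → Y → ℝ :=
  fun z y => ∑ x, Zc z x * C x y

/-- collateral leakage is bounded by the Bayes min-capacity of `C`: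
`L_g(ρ, Ẑ·C) ≤ ML(C)`. -/
theorem collateral_leak_le_ML {Z X Y : Type}
    [Fintype Z] [Nonempty Z] [Fintype X] [Nonempty X] [Fintype Y] [Nonempty Y]
    (C : X → Y → ℝ) (hCpos : ∀ x y, 0 ≤ C x y) (hCsum : ∀ x, ∑ y, C x y = 1)
    (Pi : Z × X → ℝ) (hPipos : ∀ p, 0 ≤ Pi p) (hPisum : ∑ p : Z × X, Pi p = 1)
    (ρ : Z → ℝ) (hρ : ∀ z, ρ z = ∑ x, Pi (z, x))
    (Zhat : Z → X → ℝ) (hZpos : ∀ z x, 0 ≤ Zhat z x) (hZsum : ∀ z, ∑ x, Zhat z x = 1)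
    (hZfac : ∀ z x, ρ z * Zhat z x = Pi (z, x)) :
    ∀ (W : Type) [Fintype W] [Nonempty W] (g : W → Z → ℝ),
      (∀ w z, 0 ≤ g w z) → 0 < vul g ρ →
      leak g ρ (cascade Zhat C) ≤ ML C := by
  intro W _ _ g hg hV
  have hρnn : ∀ z, 0 ≤ ρ z := fun z => by
    rw [hρ]; exact Finset.sum_nonneg fun x _ => hPipos _
  set S := ∑ y, Finset.univ.sup' Finset.univ_nonempty (fun x => C x y) with hSdef
  have hM : ∀ y x, C x y ≤ Finset.univ.sup' Finset.univ_nonempty (fun x => C x y) :=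
    fun y x => Finset.le_sup' (fun x => C x y) (Finset.mem_univ x)
  have hMnn : ∀ y, 0 ≤ Finset.univ.sup' Finset.univ_nonempty (fun x => C x y) := by
    intro y
    obtain ⟨x0⟩ := ‹Nonempty X›
    exact le_trans (hCpos x0 y) (hM y x0)
  have hSone : (1 : ℝ) ≤ S := by
    obtain ⟨x0⟩ := ‹Nonempty X›
    calc (1 : ℝ) = ∑ y, C x0 y := (hCsum x0).symm
    _ ≤ S := Finset.sum_le_sum fun y _ => hM y x0
  have hMLnn : 0 ≤ ML C := Real.logb_nonneg one_lt_two hSone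
  -- main estimate
  have hpost : vulPost g ρ (cascade Zhat C) ≤ S * vul g ρ := by
    rw [vulPost, hSdef, Finset.sum_mul]
    refine Finset.sum_le_sum fun y _ => ?_
    apply Finset.sup'_le
    intro w _
    have step1 : ∑ z, ρ z * cascade Zhat C z y * g w z
        ≤ (Finset.univ.sup' Finset.univ_nonempty (fun x => C x y)) * ∑ z, ρ z * g w z := by
      rw [Finset.mul_sum]
      refine Finset.sum_le_sum fun z _ => ?_
      have e1 : ρ z * cascade Zhat C z y * g w z
          = ∑ x, (ρ z * Zhat z x * g w z) * C x y := by
        simp only [cascade, Finset.mul_sum, Finset.sum_mul]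
        exact Finset.sum_congr rfl fun x _ => by ring
      have e2 : (Finset.univ.sup' Finset.univ_nonempty (fun x => C x y)) * (ρ z * g w z)
          = ∑ x, (ρ z * Zhat z x * g w z) *
              (Finset.univ.sup' Finset.univ_nonempty (fun x => C x y)) := by
        have : ∑ x, (ρ z * Zhat z x * g w z) *
              (Finset.univ.sup' Finset.univ_nonempty (fun x => C x y))
            = (∑ x, Zhat z x) * (ρ z * g w z *
              (Finset.univ.sup' Finset.univ_nonempty (fun x => C x y))) := by
          rw [Finset.sum_mul]
          exact Finset.sum_congr rfl fun x _ => by ring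
        rw [this, hZsum]; ring
      rw [e1, e2]
      refine Finset.sum_le_sum fun x _ => ?_
      have hnn : 0 ≤ ρ z * Zhat z x * g w z :=
        mul_nonneg (mul_nonneg (hρnn z) (hZpos z x)) (hg w z)
      exact mul_le_mul_of_nonneg_left (hM y x) hnn
    have step2 : ∑ z, ρ z * g w z ≤ vul g ρ := by
      rw [vul]; exact Finset.le_sup' (fun w => ∑ z, ρ z * g w z) (Finset.mem_univ w)
    calc ∑ z, ρ z * cascade Zhat C z y * g w z
        ≤ (Finset.univ.sup' Finset.univ_nonempty (fun x => C x y)) * ∑ z, ρ z * g w z :=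
          step1
      _ ≤ (Finset.univ.sup' Finset.univ_nonempty (fun x => C x y)) * vul g ρ :=
          mul_le_mul_of_nonneg_left step2 (hMnn y)
  have hpostnn : 0 ≤ vulPost g ρ (cascade Zhat C) := by
    refine Finset.sum_nonneg fun y _ => ?_
    obtain ⟨w0⟩ := ‹Nonempty W›
    refine le_trans ?_ (Finset.le_sup' (fun w => ∑ z, ρ z * cascade Zhat C z y * g w z) (Finset.mem_univ w0))
    refine Finset.sum_nonneg fun z _ => ?_
    refine mul_nonneg (mul_nonneg (hρnn z) ?_) (hg w0 z)
    exact Finset.sum_nonneg fun x _ => mul_nonneg (hZpos z x) (hCpos x y)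
  rcases eq_or_lt_of_le hpostnn with h0 | h0
  · rw [leak, ← h0, zero_div, Real.logb_zero]; exact hMLnn
  · rw [leak, ML]
    refine Real.logb_le_logb_of_le one_lt_two (div_pos h0 hV) ?_
    rw [div_le_iff₀ hV]
    exact hpost
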